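/- β-law for xCL_fg: for all values v,w and every computation t, if v —w→ t then v ∘ w ≲ctx t and t ≲ctx v ∘ w (both in the computation sort). -/

import Mathlib

namespace FG

mutual
/-- Values of the fine-grain call-by-value combinatory logic xCL_fg. -/
inductive V : Type
  | I : V
  | K : V
  | S : V
  | K1 (t : C) : V
  | S1 (t : C) : V
  | S2 (s t : C) : V
/-- Computations of xCL_fg. -/
inductive C : Type
  | ret (v : V) : C            -- [v]
  | bull (t s : C) : C         -- t • s
  | rtri (v : V) (s : C) : C   -- v ▷ s
  | ltri (t : C) (v : V) : C   -- t ◁ v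
  | circ (v w : V) : C         -- v ∘ w
end

/-- Labeled transitions `v —u→ t` from values to computations (`LStep v u t`). -/
inductive LStep : V → V → C → Prop
  | S (v : V) : LStep .S v (.ret (.S1 (.ret v)))
  | S1 (t : C) (v : V) : LStep (.S1 t) v (.ret (.S2 t (.ret v)))
  | S2 (t s : C) (v : V) : LStep (.S2 t s) v (.bull (.ltri t v) (.ltri s v))
  | K (v : V) : LStep .K v (.ret (.K1 (.ret v)))
  | K1 (t : C) (v : V) : LStep (.K1 t) v t
  | I (v : V) : LStep .I v (.ret v)

/-- Unlabeled transitions from computations to values: `t → v`. -/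
inductive StepV : C → V → Prop
  | ret (v : V) : StepV (.ret v) v

/-- Unlabeled transitions from computations to computations: `t → t'`. -/
inductive StepC : C → C → Prop
  | bullL {t t' : C} (s : C) : StepC t t' → StepC (.bull t s) (.bull t' s)
  | bullV {t : C} {v : V} (s : C) : StepV t v → StepC (.bull t s) (.rtri v s)
  | ltriL {t t' : C} (v : V) : StepC t t' → StepC (.ltri t v) (.ltri t' v)
  | ltriV {t : C} {v : V} (w : V) : StepV t v → StepC (.ltri t w) (.circ v w)
  | rtriR {s s' : C} (v : V) : StepC s s' → StepC (.rtri v s) (.rtri v s')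
  | rtriV {s : C} {w : V} (v : V) : StepV s w → StepC (.rtri v s) (.circ v w)
  | circ {v w : V} {t : C} : LStep v w t → StepC (.circ v w) t

/-- `t ⇒ t'` between computations. -/
def StepsC : C → C → Prop := Relation.ReflTransGen StepC

/-- `t ⇒ v`: `t` reduces in finitely many steps to the value `v`. -/
def StepsV (t : C) (v : V) : Prop := ∃ t', StepsC t t' ∧ StepV t' v

/-- `t⇓`: the computation `t` reduces to some value. -/
def ConvC (t : C) : Prop := ∃ v, StepsV t v

/-- Applicative simulations for xCL_fg. -/
def IsSim (RV : V → V → Prop) (RC : C → C → Prop) : Prop :=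
  (∀ v w, RV v w → ∀ u t, LStep v u t → ∃ s, LStep w u s ∧ RC t s) ∧
  (∀ t s, RC t s →
    (∀ v, StepV t v → ∃ w, StepsV s w ∧ RV v w) ∧
    (∀ t', StepC t t' → ∃ s', StepsC s s' ∧ RC t' s'))

/-- Applicative similarity on values. -/
def AppSimV (v w : V) : Prop := ∃ RV RC, IsSim RV RC ∧ RV v w

/-- Applicative similarity on computations. -/
def AppSimC (t s : C) : Prop := ∃ RV RC, IsSim RV RC ∧ RC t s

/-- A sorted relation is a congruence if it is compatible with all operators of both sorts. -/
def IsCong (RV : V → V → Prop) (RC : C → C → Prop) : Prop :=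
  RV .S .S ∧ RV .K .K ∧ RV .I .I ∧
  (∀ t s, RC t s → RV (.K1 t) (.K1 s)) ∧
  (∀ t s, RC t s → RV (.S1 t) (.S1 s)) ∧
  (∀ t s t' s', RC t s → RC t' s' → RV (.S2 t t') (.S2 s s')) ∧
  (∀ v w, RV v w → RC (.ret v) (.ret w)) ∧
  (∀ t s t' s', RC t s → RC t' s' → RC (.bull t t') (.bull s s')) ∧
  (∀ v w t s, RV v w → RC t s → RC (.rtri v t) (.rtri w s)) ∧
  (∀ v w t s, RV v w → RC t s → RC (.ltri t v) (.ltri s w)) ∧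
  (∀ v w v' w', RV v w → RV v' w' → RC (.circ v v') (.circ w w'))

/-- Containment in the preorder `O` (the value component of `O` is total). -/
def SubO (RV : V → V → Prop) (RC : C → C → Prop) : Prop :=
  (∀ v w, RV v w → True) ∧ (∀ t s, RC t s → ConvC t → ConvC s)

/-- The contextual preorder (value sort): the greatest congruence contained in `O`. -/
def CtxLeV (v w : V) : Prop := ∃ RV RC, IsCong RV RC ∧ SubO RV RC ∧ RV v w

/-- The contextual preorder (computation sort). -/
def CtxLeC (t s : C) : Prop := ∃ RV RC, IsCong RV RC ∧ SubO RV RC ∧ RC t s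

/-- The step-indexed approximations `Lⁿ = (Lⁿ_v, Lⁿ_c)`. -/
def LrelN : ℕ → (V → V → Prop) × (C → C → Prop)
  | 0 => (fun _ _ => True, fun _ _ => True)
  | n+1 =>
    ( fun v w => ∀ u z, (LrelN n).1 u z → ∀ t, LStep v u t →
        ∃ s, LStep w z s ∧ (LrelN n).2 t s,
      fun t s =>
        (∀ v, StepV t v → ∃ w, StepsV s w ∧ (LrelN n).1 v w) ∧
        (∀ t', StepC t t' → ∃ s', StepsC s s' ∧ (LrelN n).2 t' s') )

/-- The step-indexed logical relation, value sort: `L_v = ⋂ₙ Lⁿ_v`. -/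
def LV (v w : V) : Prop := ∀ n, (LrelN n).1 v w

/-- The step-indexed logical relation, computation sort: `L_c = ⋂ₙ Lⁿ_c`. -/
def LC (t s : C) : Prop := ∀ n, (LrelN n).2 t s

/-! The smallest congruence relating `v ∘ w` and `t` in both directions is contained in `O`: it
is a simulation up to reduction. A step of a left-hand side is matched by finitely many steps of
the right-hand side, because the only step of `v ∘ w` is the β-step `v ∘ w → t` (labelled
transitions are deterministic) and a pair `(t, v ∘ w)` is re-established by performing that
β-step on the right. Hence convergence is transferred from left to right. -/

mutual
inductive BetaV (v w : V) (t : C) : V → V → Prop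
  | S : BetaV v w t .S .S
  | K : BetaV v w t .K .K
  | I : BetaV v w t .I .I
  | K1 {a b : C} : BetaC v w t a b → BetaV v w t (.K1 a) (.K1 b)
  | S1 {a b : C} : BetaC v w t a b → BetaV v w t (.S1 a) (.S1 b)
  | S2 {a b a' b' : C} :
      BetaC v w t a a' → BetaC v w t b b' → BetaV v w t (.S2 a b) (.S2 a' b')
inductive BetaC (v w : V) (t : C) : C → C → Prop
  | ret {a b : V} : BetaV v w t a b → BetaC v w t (.ret a) (.ret b)
  | bull {a a' b b' : C} :
      BetaC v w t a a' → BetaC v w t b b' → BetaC v w t (.bull a b) (.bull a' b')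
  | rtri {x y : V} {a b : C} :
      BetaV v w t x y → BetaC v w t a b → BetaC v w t (.rtri x a) (.rtri y b)
  | ltri {x y : V} {a b : C} :
      BetaV v w t x y → BetaC v w t a b → BetaC v w t (.ltri a x) (.ltri b y)
  | circ {x y x' y' : V} :
      BetaV v w t x x' → BetaV v w t y y' → BetaC v w t (.circ x y) (.circ x' y')
  | contract : BetaC v w t (.circ v w) t
  | expand : BetaC v w t t (.circ v w)
end

theorem LStep.det {v u : V} {t t' : C} (h : LStep v u t) (h' : LStep v u t') : t = t' := by
  cases h <;> cases h' <;> rfl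

theorem StepsC.bull {t t' : C} (s : C) (h : StepsC t t') : StepsC (.bull t s) (.bull t' s) :=
  Relation.ReflTransGen.lift _ (fun _ _ h => StepC.bullL s h) _ _ h

theorem StepsC.ltri {t t' : C} (v : V) (h : StepsC t t') : StepsC (.ltri t v) (.ltri t' v) :=
  Relation.ReflTransGen.lift _ (fun _ _ h => StepC.ltriL v h) _ _ h

theorem StepsC.rtri {s s' : C} (v : V) (h : StepsC s s') : StepsC (.rtri v s) (.rtri v s') :=
  Relation.ReflTransGen.lift _ (fun _ _ h => StepC.rtriR v h) _ _ h

theorem StepsV.stepsC_bull {t : C} {v : V} (s : C) (h : StepsV t v) :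
    StepsC (.bull t s) (.rtri v s) :=
  let ⟨_, hs, hv⟩ := h; (hs.bull s).tail (.bullV s hv)

theorem StepsV.stepsC_ltri {t : C} {v : V} (w : V) (h : StepsV t v) :
    StepsC (.ltri t w) (.circ v w) :=
  let ⟨_, hs, hv⟩ := h; (hs.ltri w).tail (.ltriV w hv)

theorem StepsV.stepsC_rtri {s : C} {w : V} (v : V) (h : StepsV s w) :
    StepsC (.rtri v s) (.circ v w) :=
  let ⟨_, hs, hv⟩ := h; (hs.rtri v).tail (.rtriV v hv)

theorem StepsV.ret (v : V) : StepsV (.ret v) v := ⟨_, .refl, .ret v⟩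

theorem StepsC.trans_stepsV {t t' : C} {v : V} (h : StepsC t t') (h' : StepsV t' v) :
    StepsV t v :=
  let ⟨_, hs, hv⟩ := h'; ⟨_, h.trans hs, hv⟩

section Beta

variable {v w : V} {t : C}

mutual
theorem BetaV.refl : ∀ u, BetaV v w t u u
  | .I => .I
  | .K => .K
  | .S => .S
  | .K1 a => .K1 (BetaC.refl a)
  | .S1 a => .S1 (BetaC.refl a)
  | .S2 a b => .S2 (BetaC.refl a) (BetaC.refl b)
theorem BetaC.refl : ∀ c, BetaC v w t c c
  | .ret a => .ret (BetaV.refl a)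
  | .bull a b => .bull (BetaC.refl a) (BetaC.refl b)
  | .rtri x a => .rtri (BetaV.refl x) (BetaC.refl a)
  | .ltri a x => .ltri (BetaV.refl x) (BetaC.refl a)
  | .circ x y => .circ (BetaV.refl x) (BetaV.refl y)
end

theorem isCong_beta : IsCong (BetaV v w t) (BetaC v w t) :=
  ⟨.S, .K, .I, fun _ _ => .K1, fun _ _ => .S1, fun _ _ _ _ => .S2, fun _ _ => .ret,
   fun _ _ _ _ => .bull, fun _ _ _ _ => .rtri, fun _ _ _ _ => .ltri,
   fun _ _ _ _ => .circ⟩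

theorem BetaV.lstep_sim {a a' u u' : V} {c : C} (h : BetaV v w t a a') (hu : BetaV v w t u u')
    (hs : LStep a u c) : ∃ c', LStep a' u' c' ∧ BetaC v w t c c' := by
  cases h with
  | S => cases hs; exact ⟨_, .S _, .ret (.S1 (.ret hu))⟩
  | K => cases hs; exact ⟨_, .K _, .ret (.K1 (.ret hu))⟩
  | I => cases hs; exact ⟨_, .I _, .ret hu⟩
  | K1 hab => cases hs; exact ⟨_, .K1 _ _, hab⟩
  | S1 hab => cases hs; exact ⟨_, .S1 _ _, .ret (.S2 hab (.ret hu))⟩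
  | S2 ha hb => cases hs; exact ⟨_, .S2 _ _ _, .bull (.ltri hu ha) (.ltri hu hb)⟩

variable (hβ : LStep v w t)
include hβ

theorem BetaC.stepV_sim {c c' : C} {x : V} (h : BetaC v w t c c') (hs : StepV c x) :
    ∃ x', StepsV c' x' ∧ BetaV v w t x x' := by
  cases hs
  cases h with
  | ret ha => exact ⟨_, .ret _, ha⟩
  | expand => exact ⟨x, StepsC.trans_stepsV (.single (.circ hβ)) (.ret x), BetaV.refl x⟩

theorem stepC_sim_of_expand {c₁ : C} (hs : StepC t c₁) :
    ∃ c₁', StepsC (.circ v w) c₁' ∧ BetaC v w t c₁ c₁' :=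
  ⟨c₁, (Relation.ReflTransGen.single (.circ hβ)).tail hs, BetaC.refl c₁⟩

theorem BetaC.stepC_sim {c c₁ c' : C} (hs : StepC c c₁) (h : BetaC v w t c c') :
    ∃ c₁', StepsC c' c₁' ∧ BetaC v w t c₁ c₁' := by
  induction hs generalizing c' with
  | bullL s hst ih =>
    cases h with
    | bull ha hb =>
      obtain ⟨_, hs, hB⟩ := ih ha
      exact ⟨_, hs.bull _, .bull hB hb⟩
    | expand => exact stepC_sim_of_expand hβ (.bullL s hst)
  | bullV s hv =>
    cases h with
    | bull ha hb =>
      obtain ⟨_, hs, hB⟩ := stepV_sim hβ ha hv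
      exact ⟨_, hs.stepsC_bull _, .rtri hB hb⟩
    | expand => exact stepC_sim_of_expand hβ (.bullV s hv)
  | ltriL u hst ih =>
    cases h with
    | ltri hx ha =>
      obtain ⟨_, hs, hB⟩ := ih ha
      exact ⟨_, hs.ltri _, .ltri hx hB⟩
    | expand => exact stepC_sim_of_expand hβ (.ltriL u hst)
  | ltriV u hv =>
    cases h with
    | ltri hx ha =>
      obtain ⟨_, hs, hB⟩ := stepV_sim hβ ha hv
      exact ⟨_, hs.stepsC_ltri _, .circ hB hx⟩
    | expand => exact stepC_sim_of_expand hβ (.ltriV u hv)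
  | rtriR u hst ih =>
    cases h with
    | rtri hx ha =>
      obtain ⟨_, hs, hB⟩ := ih ha
      exact ⟨_, hs.rtri _, .rtri hx hB⟩
    | expand => exact stepC_sim_of_expand hβ (.rtriR u hst)
  | rtriV u hv =>
    cases h with
    | rtri hx ha =>
      obtain ⟨_, hs, hB⟩ := stepV_sim hβ ha hv
      exact ⟨_, hs.stepsC_rtri _, .circ hx hB⟩
    | expand => exact stepC_sim_of_expand hβ (.rtriV u hv)
  | circ hls =>
    cases h with
    | circ hx hy =>
      exact (hx.lstep_sim hy hls).imp fun _ ⟨hs, hB⟩ => ⟨.single (.circ hs), hB⟩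
    | contract => exact ⟨t, .refl, by rw [hls.det hβ]; exact BetaC.refl t⟩
    | expand => exact stepC_sim_of_expand hβ (.circ hls)

theorem BetaC.convC {c c' : C} (h : BetaC v w t c c') (hc : ConvC c) : ConvC c' := by
  obtain ⟨x, c'', hsteps, hv⟩ := hc
  induction hsteps using Relation.ReflTransGen.head_induction_on generalizing c' with
  | refl => exact (stepV_sim hβ h hv).imp fun _ ⟨hx', _⟩ => hx'
  | head hstep _ ih =>
    obtain ⟨_, hs, hB⟩ := stepC_sim hβ hstep h
    exact (ih hB).imp fun _ hy => hs.trans_stepsV hy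

theorem subO_beta : SubO (BetaV v w t) (BetaC v w t) :=
  ⟨fun _ _ _ => trivial, fun _ _ h => h.convC hβ⟩

end Beta

end FG

open FG in
/-- β-law for xCL_fg. -/
theorem fg_beta_law :
    ∀ (v w : V) (t : C), LStep v w t →
      CtxLeC (.circ v w) t ∧ CtxLeC t (.circ v w) := by
  intro v w t h
  exact ⟨⟨BetaV v w t, BetaC v w t, isCong_beta, subO_beta h, .contract⟩,
         ⟨BetaV v w t, BetaC v w t, isCong_beta, subO_beta h, .expand⟩⟩
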